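/- Measurability of the sup-norm on the Bargmann-Fock space: fix R > 0 and ε > 0. Let H_N be the space of real polynomials in two variables of degree at most N, viewed inside the Bargmann-Fock Hilbert space with orthonormal basis x₁^i x₂^j/√(i! j!). Let f = Σ_{i+j>N} a_{ij} x₁^i x₂^j/√(i! j!) be a Gaussian element of any finite-dimensional subspace of H_N^⊥ (the a_{ij} determined by the Gaussian measure of that subspace, satisfying Σ a_{ij}² < ∞ and E[Σ_{i+j=k} a_{ij}²] ≤ k+1 for each k). Then P[ sup_{‖x‖ ≤ R} |f(x)| > ε ] ≤ e^{16R²}/(ε² 4^N). -/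
import Mathlib


open MeasureTheory ProbabilityTheory Real
open scoped NNReal ENNReal

lemma integrable_sq_gaussianReal (v : ℝ≥0) :
    Integrable (fun x : ℝ => x ^ 2) (gaussianReal 0 v) := by
  by_cases hv : v = 0
  · rw [hv, gaussianReal_zero_var]
    refine (integrable_const ((0:ℝ)^2)).congr ?_
    rw [MeasureTheory.ae_dirac_eq]
    exact Filter.eventually_pure.2 rfl
  · rw [gaussianReal_of_var_ne_zero _ hv,
      integrable_withDensity_iff (measurable_gaussianPDF _ _)
        (ae_of_all _ fun x => ENNReal.ofReal_lt_top)]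
    have hb : (0:ℝ) < (2 * (v:ℝ))⁻¹ := by positivity
    have h2 := integrable_rpow_mul_exp_neg_mul_sq hb (s := 2) (by norm_num)
    simp_rw [rpow_two] at h2
    have := (h2.const_mul (√(2 * π * v))⁻¹)
    refine this.congr (ae_of_all _ fun x => ?_)
    simp only [gaussianPDF, ENNReal.toReal_ofReal (gaussianPDFReal_nonneg _ _ _)]
    simp only [gaussianPDFReal, sub_zero]
    rw [neg_div, div_eq_inv_mul, ← neg_mul]
    ring

noncomputable def bfSk (k : ℕ) : Finset (ℕ × ℕ) :=
  (Finset.range (k+1) ×ˢ Finset.range (k+1)).filter (fun p => p.1 + p.2 = k)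

lemma mem_bfSk {k : ℕ} {p : ℕ × ℕ} : p ∈ bfSk k ↔ p.1 + p.2 = k := by
  simp only [bfSk, Finset.mem_filter, Finset.mem_product, Finset.mem_range]
  omega

lemma sum_inv_factorial_aux (k : ℕ) :
    ∑ p ∈ bfSk k,
      (1:ℝ)/((p.1.factorial : ℝ) * (p.2.factorial : ℝ)) = 2^k / (k.factorial : ℝ) := by
  have h1 : ∀ p ∈ bfSk k,
      (1:ℝ)/((p.1.factorial : ℝ) * (p.2.factorial : ℝ)) = (k.choose p.2 : ℝ)/(k.factorial : ℝ) := by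
    intro p hp
    rw [mem_bfSk] at hp
    have h := Nat.add_choose_mul_factorial_mul_factorial p.1 p.2
    rw [hp] at h
    have h' : ((k.choose p.2 : ℝ)) * (p.1.factorial : ℝ) * (p.2.factorial : ℝ)
        = (k.factorial : ℝ) := by exact_mod_cast congrArg (Nat.cast : ℕ → ℝ) h
    have hp1 : (0:ℝ) < (p.1.factorial : ℝ) := by positivity
    have hp2 : (0:ℝ) < (p.2.factorial : ℝ) := by positivity
    have hk : (0:ℝ) < (k.factorial : ℝ) := by positivity
    field_simp
    linarith [h']
  rw [Finset.sum_congr rfl h1, ← Finset.sum_div]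
  congr 1
  have h2 : ∑ p ∈ bfSk k, k.choose p.2 = 2^k := by
    rw [← Nat.sum_range_choose k]
    refine Finset.sum_nbij' (fun p => p.2) (fun i => (k - i, i)) ?_ ?_ ?_ ?_ ?_
    · intro p hp
      rw [mem_bfSk] at hp
      simp only [Finset.mem_range]
      omega
    · intro i hi
      simp only [Finset.mem_range] at hi
      show (k - i, i) ∈ bfSk k
      rw [mem_bfSk]
      dsimp only
      omega
    · intro p hp
      rw [mem_bfSk] at hp
      ext <;> simp <;> omega
    · intro i hi
      simp
    · intro p hp
      rfl
  exact_mod_cast congrArg (Nat.cast : ℕ → ℝ) h2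

set_option maxHeartbeats 1000000 in
lemma bf_det_bound (N : ℕ) (R ε : ℝ) (hR : 0 < R) (hε : 0 < ε)
    (b : ℕ × ℕ → ℝ)
    (hb0 : ∀ p : ℕ × ℕ, p.1 + p.2 ≤ N → b p = 0)
    (hYk : ∀ k, N < k → ∑ p ∈ bfSk k, (b p)^2 ≤
      ε^2 * (1/4)^(k-N) * (k.factorial : ℝ) / (2^k * R^(2*k)))
    (x : ℝ × ℝ) (hx : x.1^2 + x.2^2 ≤ R^2)
    (F : ℝ) (hF : HasSum
      (fun p : ℕ × ℕ => b p * x.1 ^ p.1 * x.2 ^ p.2 /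
        Real.sqrt ((p.1.factorial : ℝ) * (p.2.factorial : ℝ))) F) :
    |F| ≤ ε := by
  set g : ℕ × ℕ → ℝ := fun p => b p * x.1 ^ p.1 * x.2 ^ p.2 /
      Real.sqrt ((p.1.factorial : ℝ) * (p.2.factorial : ℝ)) with hg
  have hx1 : |x.1| ≤ R := by
    rw [← Real.sqrt_sq hR.le, ← Real.sqrt_sq_eq_abs]
    exact Real.sqrt_le_sqrt (by nlinarith [sq_nonneg x.2])
  have hx2 : |x.2| ≤ R := by
    rw [← Real.sqrt_sq hR.le, ← Real.sqrt_sq_eq_abs]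
    exact Real.sqrt_le_sqrt (by nlinarith [sq_nonneg x.1])
  have hfac : ∀ p : ℕ × ℕ, (0:ℝ) < (p.1.factorial : ℝ) * (p.2.factorial : ℝ) := by
    intro p; positivity
  -- the per-degree bound
  have hT : ∀ k, N < k → ∑ p ∈ bfSk k, |g p| ≤ ε * (1/2)^(k-N) := by
    intro k hk
    set v : ℕ × ℕ → ℝ := fun p => R^k / Real.sqrt ((p.1.factorial : ℝ) * (p.2.factorial : ℝ))
      with hv
    have step1 : ∀ p ∈ bfSk k, |g p| ≤ |b p| * v p := by
      intro p hp
      rw [mem_bfSk] at hp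
      have hnum : |b p * x.1 ^ p.1 * x.2 ^ p.2| ≤ |b p| * R^k := by
        rw [abs_mul, abs_mul, abs_pow, abs_pow, mul_assoc]
        refine mul_le_mul_of_nonneg_left ?_ (abs_nonneg _)
        calc |x.1|^p.1 * |x.2|^p.2 ≤ R^p.1 * R^p.2 :=
              mul_le_mul (pow_le_pow_left₀ (abs_nonneg _) hx1 _)
                (pow_le_pow_left₀ (abs_nonneg _) hx2 _) (by positivity) (by positivity)
          _ = R^k := by rw [← pow_add, hp]
      have hs : (0:ℝ) < Real.sqrt ((p.1.factorial : ℝ) * (p.2.factorial : ℝ)) :=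
        Real.sqrt_pos.2 (hfac p)
      rw [hg, hv]
      simp only [abs_div, abs_of_nonneg (Real.sqrt_nonneg _)]
      rw [mul_div_assoc' (|b p|)]
      exact div_le_div_of_nonneg_right hnum hs.le
    have hcs := Finset.sum_mul_sq_le_sq_mul_sq (bfSk k) (fun p => |b p|) v
    have hsqv : ∑ p ∈ bfSk k, (v p)^2 = R^(2*k) * (2^k / (k.factorial : ℝ)) := by
      have := sum_inv_factorial_aux k
      calc ∑ p ∈ bfSk k, (v p)^2
          = ∑ p ∈ bfSk k, R^(2*k) * ((1:ℝ)/((p.1.factorial : ℝ) * (p.2.factorial : ℝ))) := by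
            refine Finset.sum_congr rfl fun p hp => ?_
            rw [hv, div_pow, Real.sq_sqrt (hfac p).le, pow_mul, pow_two, ← pow_mul]
            ring
        _ = R^(2*k) * (2^k / (k.factorial : ℝ)) := by rw [← Finset.mul_sum, this]
    have hsqb : ∑ p ∈ bfSk k, (|b p|)^2 = ∑ p ∈ bfSk k, (b p)^2 := by
      refine Finset.sum_congr rfl fun p _ => sq_abs _
    set m := k - N with hm
    have hckV : ε^2 * (1/4)^m * (k.factorial : ℝ) / (2^k * R^(2*k))
        * (R^(2*k) * (2^k / (k.factorial : ℝ))) = ε^2 * (1/4)^m := by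
      have hk1 : (0:ℝ) < (k.factorial : ℝ) := by positivity
      have hk2 : (0:ℝ) < (2:ℝ)^k := by positivity
      have hk3 : (0:ℝ) < R^(2*k) := by positivity
      field_simp
    have h14 : ε^2 * ((1:ℝ)/4)^m = (ε * (1/2)^m)^2 := by
      rw [mul_pow, ← pow_mul, show (1/4:ℝ) = (1/2:ℝ)^2 by norm_num, ← pow_mul]
      ring_nf
    have hsum_le : (∑ p ∈ bfSk k, |b p| * v p)^2 ≤ (ε * (1/2)^m)^2 := by
      calc (∑ p ∈ bfSk k, |b p| * v p)^2
          ≤ (∑ p ∈ bfSk k, (|b p|)^2) * ∑ p ∈ bfSk k, (v p)^2 := hcs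
        _ ≤ (ε^2 * (1/4)^m * (k.factorial : ℝ) / (2^k * R^(2*k)))
              * (R^(2*k) * (2^k / (k.factorial : ℝ))) := by
            rw [hsqb, hsqv]
            exact mul_le_mul_of_nonneg_right (hYk k hk) (by positivity)
        _ = (ε * (1/2)^m)^2 := by rw [hckV, h14]
    have hnn : (0:ℝ) ≤ ∑ p ∈ bfSk k, |b p| * v p := by
      refine Finset.sum_nonneg fun p _ => mul_nonneg (abs_nonneg _) ?_
      rw [hv]; positivity
    have h2 : ∑ p ∈ bfSk k, |b p| * v p ≤ ε * (1/2)^m := by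
      have hs := Real.sqrt_le_sqrt hsum_le
      rwa [Real.sqrt_sq hnn, Real.sqrt_sq (by positivity)] at hs
    exact le_trans (Finset.sum_le_sum step1) h2
  have hT0 : ∀ k, k ≤ N → ∑ p ∈ bfSk k, |g p| = 0 := by
    intro k hk
    refine Finset.sum_eq_zero fun p hp => ?_
    rw [mem_bfSk] at hp
    rw [hg]
    simp [hb0 p (by omega)]
  -- bound on every finite partial sum of |g|
  have hfin : ∀ u : Finset (ℕ × ℕ), ∑ p ∈ u, |g p| ≤ ε := by
    intro u
    set K := u.sup (fun p => p.1 + p.2) with hK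
    have hsub : u ⊆ (Finset.range (K+1)).biUnion bfSk := by
      intro p hp
      rw [Finset.mem_biUnion]
      have hle : p.1 + p.2 ≤ K := by
        rw [hK]; exact Finset.le_sup (f := fun p : ℕ × ℕ => p.1 + p.2) hp
      exact ⟨p.1 + p.2, Finset.mem_range.2 (Nat.lt_succ_of_le hle), mem_bfSk.2 rfl⟩
    have hdisj : ∀ k ∈ Finset.range (K+1), ∀ l ∈ Finset.range (K+1), k ≠ l →
        Disjoint (bfSk k) (bfSk l) := by
      intro k _ l _ hkl
      refine Finset.disjoint_left.2 fun p hpk hpl => ?_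
      rw [mem_bfSk] at hpk hpl
      omega
    calc ∑ p ∈ u, |g p| ≤ ∑ p ∈ (Finset.range (K+1)).biUnion bfSk, |g p| :=
          Finset.sum_le_sum_of_subset_of_nonneg hsub (fun p _ _ => abs_nonneg _)
      _ = ∑ k ∈ Finset.range (K+1), ∑ p ∈ bfSk k, |g p| := Finset.sum_biUnion hdisj
      _ ≤ ε := by
          rw [← Finset.sum_subset (by intro k hk; rw [Finset.mem_Ico] at hk; exact Finset.mem_range.2 hk.2 : Finset.Ico (N+1) (K+1) ⊆ Finset.range (K+1))]
          · calc ∑ k ∈ Finset.Ico (N+1) (K+1), ∑ p ∈ bfSk k, |g p|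
                ≤ ∑ k ∈ Finset.Ico (N+1) (K+1), ε * (1/2)^(k-N) := by
                  refine Finset.sum_le_sum fun k hk => ?_
                  rw [Finset.mem_Ico] at hk
                  exact hT k (by omega)
              _ ≤ ε := by
                  rw [Finset.sum_Ico_eq_sum_range]
                  have hterm : ∀ i, ε * (1/2:ℝ)^((N+1+i)-N) = ε/2 * (1/2)^i := by
                    intro i
                    have h : (N+1+i) - N = i+1 := by omega
                    rw [h, pow_succ]
                    ring
                  calc ∑ i ∈ Finset.range (K+1-(N+1)), ε * (1/2:ℝ)^((N+1+i)-N)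
                      = ∑ i ∈ Finset.range (K+1-(N+1)), ε/2 * (1/2:ℝ)^i := by
                        exact Finset.sum_congr rfl fun i _ => hterm i
                    _ = ε/2 * ∑ i ∈ Finset.range (K+1-(N+1)), (1/2:ℝ)^i := by
                        rw [Finset.mul_sum]
                    _ ≤ ε/2 * 2 := by
                        refine mul_le_mul_of_nonneg_left ?_ (by positivity)
                        calc ∑ i ∈ Finset.range (K+1-(N+1)), (1/2:ℝ)^i
                            ≤ ∑' i : ℕ, (1/2:ℝ)^i :=
                              Summable.sum_le_tsum _ (fun i _ => by positivity)
                                (summable_geometric_of_lt_one (by norm_num) (by norm_num))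
                          _ = 2 := by
                              rw [tsum_geometric_of_lt_one (by norm_num) (by norm_num)]
                              norm_num
                    _ = ε := by ring
          · intro k hk1 hk2
            rw [Finset.mem_range] at hk1
            rw [Finset.mem_Ico] at hk2
            exact hT0 k (by omega)
  have hsummable : Summable (fun p : ℕ × ℕ => |g p|) :=
    summable_of_sum_le (fun p => abs_nonneg (g p)) hfin
  have htsum : ∑' p, |g p| ≤ ε := Summable.tsum_le_of_sum_le hsummable hfin
  have hnorm : Summable (fun p : ℕ × ℕ => ‖g p‖) := by
    simpa only [Real.norm_eq_abs] using hsummable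
  rw [← hF.tsum_eq]
  calc |∑' p, g p| = ‖∑' p, g p‖ := (Real.norm_eq_abs _).symm
    _ ≤ ∑' p, ‖g p‖ := norm_tsum_le_tsum_norm hnorm
    _ = ∑' p, |g p| := by simp only [Real.norm_eq_abs]
    _ ≤ ε := htsum

lemma bf_series_summable (x : ℝ) :
    Summable (fun k : ℕ => ((k:ℝ)+1) * x^k / (k.factorial : ℝ)) := by
  have hs1 : Summable (fun k : ℕ => x^k / (k.factorial : ℝ)) :=
    Real.summable_pow_div_factorial x
  have hs2 : Summable (fun k : ℕ => (k:ℝ) * x^k / (k.factorial : ℝ)) := by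
    rw [← summable_nat_add_iff 1]
    refine (hs1.mul_left x).congr fun k => ?_
    rw [Nat.factorial_succ]
    push_cast
    have h1 : ((k.factorial : ℝ)) ≠ 0 := by positivity
    field_simp
    ring
  refine (hs1.add hs2).congr fun k => ?_
  field_simp
  ring

lemma bf_series_bound (x : ℝ) (hx : 0 ≤ x) :
    ∑' k : ℕ, ((k:ℝ)+1) * x^k / (k.factorial : ℝ) ≤ Real.exp (2*x) := by
  have hs1 : Summable (fun k : ℕ => x^k / (k.factorial : ℝ)) :=
    Real.summable_pow_div_factorial x
  have hexp : ∑' k : ℕ, x^k / (k.factorial : ℝ) = Real.exp x := by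
    rw [Real.exp_eq_exp_ℝ, NormedSpace.exp_eq_tsum_div]
  have hs2 : Summable (fun k : ℕ => (k:ℝ) * x^k / (k.factorial : ℝ)) := by
    rw [← summable_nat_add_iff 1]
    refine (hs1.mul_left x).congr fun k => ?_
    rw [Nat.factorial_succ]
    push_cast
    have h1 : ((k.factorial : ℝ)) ≠ 0 := by positivity
    field_simp
    ring
  have hsum2 : ∑' k : ℕ, (k:ℝ) * x^k / (k.factorial : ℝ) = x * Real.exp x := by
    rw [Summable.tsum_eq_zero_add hs2]
    simp only [Nat.cast_zero, zero_mul, zero_div, zero_add]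
    rw [← hexp, ← tsum_mul_left]
    refine tsum_congr fun k => ?_
    push_cast [Nat.factorial_succ]
    have h1 : ((k.factorial : ℝ)) ≠ 0 := by positivity
    field_simp
    ring
  have heq : ∑' k : ℕ, ((k:ℝ)+1) * x^k / (k.factorial : ℝ)
      = Real.exp x + x * Real.exp x := by
    rw [← hsum2, ← hexp, ← Summable.tsum_add hs1 hs2]
    refine tsum_congr fun k => ?_
    have h1 : ((k.factorial : ℝ)) ≠ 0 := by positivity
    field_simp
    ring
  rw [heq]
  have h1 : Real.exp x + x * Real.exp x = (1+x) * Real.exp x := by ring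
  rw [h1, two_mul, Real.exp_add]
  exact mul_le_mul_of_nonneg_right (by linarith [Real.add_one_le_exp x]) (Real.exp_pos x).le

set_option maxHeartbeats 1000000 in
/-- Measurability of the sup norm on the Bargmann–Fock space: for a Gaussian
element `f = Σ_{i+j>N} a_{ij} x₁^i x₂^j / √(i! j!)` of a finite-dimensional subspace of the
orthocomplement of polynomials of degree at most `N` (so `a_{ij} = 0` for `i+j ≤ N`), with
`E[Σ_{i+j=k} a_{ij}²] ≤ k+1` for every `k`, one has
`P[ sup_{‖x‖ ≤ R} |f(x)| > ε ] ≤ e^{16R²} / (ε² 4^N)`. -/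
theorem bargmann_fock_sup_norm_measurable {Ω : Type*} [MeasureSpace Ω]
    [IsProbabilityMeasure (ℙ : Measure Ω)]
    (N : ℕ) (R ε : ℝ) (hR : 0 < R) (hε : 0 < ε)
    (a : ℕ × ℕ → Ω → ℝ)
    (hmeas : ∀ p, Measurable (a p))
    (ha0 : ∀ p : ℕ × ℕ, p.1 + p.2 ≤ N → a p = 0)
    (hGauss : ∀ (T : Finset (ℕ × ℕ)) (c : ℕ × ℕ → ℝ), ∃ v : NNReal,
      Measure.map (fun ω => ∑ p ∈ T, c p * a p ω) ℙ = gaussianReal 0 v)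
    (hsum : ∀ ω, Summable fun p : ℕ × ℕ => (a p ω) ^ 2)
    (hvar : ∀ k : ℕ,
      (∫ ω, ∑ p ∈ (Finset.range (k + 1) ×ˢ Finset.range (k + 1)).filter
          (fun p => p.1 + p.2 = k), (a p ω) ^ 2) ≤ (k : ℝ) + 1)
    (f : Ω → ℝ × ℝ → ℝ)
    (hf : ∀ ω x, HasSum
      (fun p : ℕ × ℕ => a p ω * x.1 ^ p.1 * x.2 ^ p.2 /
        Real.sqrt ((p.1.factorial : ℝ) * (p.2.factorial : ℝ)))
      (f ω x)) :
    ℙ {ω | ∃ x : ℝ × ℝ, x.1 ^ 2 + x.2 ^ 2 ≤ R ^ 2 ∧ ε < |f ω x|} ≤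
      ENNReal.ofReal (Real.exp (16 * R ^ 2) / (ε ^ 2 * 4 ^ N)) := by
  classical
  -- integrability of squares of the Gaussian coefficients
  have hint : ∀ p : ℕ × ℕ, Integrable (fun ω => (a p ω)^2) ℙ := by
    intro p
    obtain ⟨v, hv⟩ := hGauss {p} (fun _ => 1)
    have hfun : (fun ω => ∑ q ∈ ({p} : Finset (ℕ × ℕ)), (1:ℝ) * a q ω) = a p := by
      funext ω; simp
    rw [hfun] at hv
    have h2 : Integrable (fun x : ℝ => x^2) (Measure.map (a p) ℙ) := by
      rw [hv]; exact integrable_sq_gaussianReal v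
    rw [integrable_map_measure
      (Measurable.aestronglyMeasurable (by measurability))
      (hmeas p).aemeasurable] at h2
    exact h2
  set Y : ℕ → Ω → ℝ := fun k ω => ∑ p ∈ bfSk k, (a p ω)^2 with hYdef
  have hYint : ∀ k, Integrable (Y k) ℙ :=
    fun k => integrable_finset_sum _ (fun p _ => hint p)
  have hYnn : ∀ k ω, 0 ≤ Y k ω :=
    fun k ω => Finset.sum_nonneg fun p _ => sq_nonneg _
  have hvar' : ∀ k, ∫ ω, Y k ω ∂ℙ ≤ (k:ℝ) + 1 := fun k => hvar k
  set c : ℕ → ℝ := fun k => ε^2 * (1/4)^(k-N) * (k.factorial : ℝ) / (2^k * R^(2*k))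
    with hcdef
  have hcpos : ∀ k, 0 < c k := by
    intro k
    rw [hcdef]
    positivity
  -- Markov inequality for each degree
  have hMarkov : ∀ k, ℙ {ω | c k < Y k ω} ≤ ENNReal.ofReal (((k:ℝ)+1) / c k) := by
    intro k
    have h1 := mul_meas_ge_le_integral_of_nonneg
      (ae_of_all _ (hYnn k)) (hYint k) (c k)
    have h2 : (ℙ {ω | c k ≤ Y k ω}).toReal ≤ ((k:ℝ)+1) / c k := by
      rw [le_div_iff₀ (hcpos k)]
      calc (ℙ {ω | c k ≤ Y k ω}).toReal * c k
          = c k * (ℙ {ω | c k ≤ Y k ω}).toReal := mul_comm _ _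
        _ ≤ ∫ ω, Y k ω ∂ℙ := h1
        _ ≤ (k:ℝ) + 1 := hvar' k
    calc ℙ {ω | c k < Y k ω} ≤ ℙ {ω | c k ≤ Y k ω} :=
          measure_mono (Set.setOf_subset_setOf.2 fun ω h => le_of_lt h)
      _ = ENNReal.ofReal ((ℙ {ω | c k ≤ Y k ω}).toReal) :=
          (ENNReal.ofReal_toReal (measure_ne_top _ _)).symm
      _ ≤ ENNReal.ofReal (((k:ℝ)+1) / c k) := ENNReal.ofReal_le_ofReal h2
  -- event inclusion
  have hincl : {ω | ∃ x : ℝ × ℝ, x.1 ^ 2 + x.2 ^ 2 ≤ R ^ 2 ∧ ε < |f ω x|}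
      ⊆ ⋃ n : ℕ, {ω | c (N+1+n) < Y (N+1+n) ω} := by
    intro ω hω
    by_contra hcon
    simp only [Set.mem_iUnion, Set.mem_setOf_eq, not_exists, not_lt] at hcon
    obtain ⟨x, hx, hfx⟩ := hω
    have hYle : ∀ k, N < k → Y k ω ≤ c k := by
      intro k hk
      have h2 := hcon (k - (N+1))
      rwa [show N+1+(k-(N+1)) = k from by omega] at h2
    have hdet := bf_det_bound N R ε hR hε (fun p => a p ω)
      (fun p hp => by show a p ω = 0; rw [ha0 p hp]; rfl) hYle x hx (f ω x) (hf ω x)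
    exact absurd hfx (not_lt.2 hdet)
  -- put everything together
  calc ℙ {ω | ∃ x : ℝ × ℝ, x.1 ^ 2 + x.2 ^ 2 ≤ R ^ 2 ∧ ε < |f ω x|}
      ≤ ℙ (⋃ n : ℕ, {ω | c (N+1+n) < Y (N+1+n) ω}) := measure_mono hincl
    _ ≤ ∑' n : ℕ, ℙ {ω | c (N+1+n) < Y (N+1+n) ω} := measure_iUnion_le _
    _ ≤ ∑' n : ℕ, ENNReal.ofReal ((((N+1+n : ℕ):ℝ)+1) / c (N+1+n)) :=
        ENNReal.tsum_le_tsum fun n => hMarkov (N+1+n)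
    _ ≤ ENNReal.ofReal (Real.exp (16 * R ^ 2) / (ε ^ 2 * 4 ^ N)) := by
        -- identify each term with the exponential series
        set w : ℕ → ℝ := fun k => ((k:ℝ)+1) * (8*R^2)^k / (k.factorial : ℝ) with hwdef
        have hw_nn : ∀ k, 0 ≤ w k := by
          intro k; rw [hwdef]; positivity
        have hw_sum : Summable w := bf_series_summable (8*R^2)
        have hterm : ∀ n : ℕ, (((N+1+n : ℕ):ℝ)+1) / c (N+1+n)
            = w (N+1+n) / (4^N * ε^2) := by
          intro n
          set k := N+1+n with hk
          have hkN : N ≤ k := by omega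
          have h14 : (1/4:ℝ)^(k-N) = 4^N / 4^k := by
            rw [div_pow, one_pow, pow_sub₀ (4:ℝ) (by norm_num) hkN]
            field_simp
          rw [hcdef, hwdef]
          simp only
          rw [h14]
          have h8 : (8*R^2:ℝ)^k = 2^k * R^(2*k) * 4^k := by
            rw [show (8:ℝ) = 2*4 by norm_num, mul_pow, mul_pow, pow_mul]
            ring
          rw [h8]
          have e1 : (0:ℝ) < (k.factorial : ℝ) := by positivity
          have e2 : (0:ℝ) < (2:ℝ)^k := by positivity
          have e3 : (0:ℝ) < R^(2*k) := by positivity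
          have e4 : (0:ℝ) < (4:ℝ)^k := by positivity
          have e5 : (0:ℝ) < (4:ℝ)^N := by positivity
          field_simp
        have hsummable_u : Summable (fun n => w (N+1+n) / (4^N * ε^2)) := by
          refine Summable.div_const ?_ _
          refine ((summable_nat_add_iff (N+1)).2 hw_sum).congr fun n => ?_
          rw [add_comm n (N+1)]
        calc ∑' n : ℕ, ENNReal.ofReal ((((N+1+n : ℕ):ℝ)+1) / c (N+1+n))
            = ∑' n : ℕ, ENNReal.ofReal (w (N+1+n) / (4^N * ε^2)) := by
              refine tsum_congr fun n => ?_
              rw [hterm n]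
          _ = ENNReal.ofReal (∑' n : ℕ, w (N+1+n) / (4^N * ε^2)) :=
              (ENNReal.ofReal_tsum_of_nonneg
                (fun n => div_nonneg (hw_nn _) (by positivity)) hsummable_u).symm
          _ ≤ ENNReal.ofReal (Real.exp (16 * R ^ 2) / (ε ^ 2 * 4 ^ N)) := by
              refine ENNReal.ofReal_le_ofReal ?_
              rw [tsum_div_const]
              have htail : ∑' n : ℕ, w (N+1+n) ≤ Real.exp (16*R^2) := by
                have hshift : ∑' n : ℕ, w (N+1+n) = ∑' n : ℕ, w (n+(N+1)) := by
                  refine tsum_congr fun n => ?_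
                  rw [add_comm]
                rw [hshift]
                have hsplit := Summable.sum_add_tsum_nat_add (N+1) hw_sum
                have hpart : 0 ≤ ∑ i ∈ Finset.range (N+1), w i :=
                  Finset.sum_nonneg fun i _ => hw_nn i
                have hfull : ∑' k, w k ≤ Real.exp (16*R^2) := by
                  have := bf_series_bound (8*R^2) (by positivity)
                  rw [show (2:ℝ)*(8*R^2) = 16*R^2 by ring] at this
                  exact this
                linarith
              calc (∑' n : ℕ, w (N+1+n)) / (4^N * ε^2)
                  ≤ Real.exp (16*R^2) / (4^N * ε^2) := by
                    refine div_le_div_of_nonneg_right htail (by positivity)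
                _ = Real.exp (16 * R ^ 2) / (ε ^ 2 * 4 ^ N) := by
                    ring
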